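/- If (v,c) ∈ ℝⁿ × ℝ₊ is a weak subgradient of the radial epiderivative function h ↦ f^r(x̄;h) at 0, then (v,c) is a weak subgradient of f at x̄; conversely, every weak subgradient (v,c) of f at x̄ is a weak subgradient of f^r(x̄;·) at 0. Hence ∂ʷf^r(x̄;0) = ∂ʷf(x̄). -/

import Mathlib

open Filter Topology

/-- The radial epiderivative of `f` at `x` in direction `h`:
`f^r(x;h) = inf_{t>0} liminf_{u → h} (f(x + t u) - f(x)) / t`, valued in `EReal`. -/
noncomputable def radEpi {X : Type*} [NormedAddCommGroup X] [NormedSpace ℝ X]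
    (f : X → ℝ) (x h : X) : EReal :=
  ⨅ t : Set.Ioi (0 : ℝ),
    Filter.liminf (fun u : X => (((f (x + (t : ℝ) • u) - f x) / (t : ℝ) : ℝ) : EReal)) (𝓝 h)

/-- `(v, c)` is a weak subgradient of `g` at `x₀`:
`g x ≥ g x₀ + ⟪v, x - x₀⟫ - c ‖x - x₀‖` for all `x`. -/
def IsWeakSubgradient {n : ℕ} (g : EuclideanSpace ℝ (Fin n) → ℝ)
    (x₀ v : EuclideanSpace ℝ (Fin n)) (c : ℝ) : Prop :=
  ∀ x, g x ≥ g x₀ + (inner ℝ v (x - x₀) : ℝ) - c * ‖x - x₀‖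

/-! Taking `t = 1` and `u = h` in the definition of `f^r(x̄; h)` bounds it above by
`f (x̄ + h) - f x̄`, which gives one inclusion. Conversely, the minorant
`u ↦ ⟪v, u⟫ - c ‖u‖` of `f (x̄ + ·) - f x̄` is continuous and positively homogeneous, so it
also minorizes every difference quotient `(f (x̄ + t u) - f x̄) / t`, hence their lower
limits and `f^r(x̄; ·)`. -/

section RadialEpiderivative

variable {X : Type*} [NormedAddCommGroup X] [NormedSpace ℝ X]

theorem radEpi_le_sub (f : X → ℝ) (x h : X) :
    radEpi f x h ≤ ((f (x + h) - f x : ℝ) : EReal) := by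
  have h_one : radEpi f x h ≤
      liminf (fun u : X => (((f (x + (1 : ℝ) • u) - f x) / 1 : ℝ) : EReal)) (𝓝 h) :=
    iInf_le (fun t : Set.Ioi (0 : ℝ) =>
      liminf (fun u : X => (((f (x + (t : ℝ) • u) - f x) / t : ℝ) : EReal)) (𝓝 h))
      ⟨1, Set.mem_Ioi.2 one_pos⟩
  simp only [one_smul, div_one] at h_one
  exact h_one.trans (liminf_le_of_frequently_le'
    (frequently_iff.2 fun hU => ⟨h, mem_of_mem_nhds hU, le_rfl⟩))

theorem le_radEpi_of_le_slope (f : X → ℝ) {x h : X} {g : X → ℝ} (hg : ContinuousAt g h)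
    (hle : ∀ t : ℝ, 0 < t → ∀ u, g u ≤ (f (x + t • u) - f x) / t) :
    (g h : EReal) ≤ radEpi f x h := by
  refine le_iInf fun ⟨t, ht⟩ => ?_
  calc (g h : EReal) = liminf (fun u => (g u : EReal)) (𝓝 h) :=
        ((continuous_coe_real_ereal.tendsto _).comp hg).liminf_eq.symm
    _ ≤ _ := liminf_le_liminf (Eventually.of_forall fun u => EReal.coe_le_coe_iff.2 (hle t ht u))

theorem le_radEpi_of_homogeneous_minorant (f : X → ℝ) (x : X) {g : X → ℝ} (hg : Continuous g)
    (hhom : ∀ t : ℝ, 0 < t → ∀ u, g (t • u) = t * g u)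
    (hmin : ∀ w, g w ≤ f (x + w) - f x) (h : X) :
    (g h : EReal) ≤ radEpi f x h :=
  le_radEpi_of_le_slope f hg.continuousAt fun t ht u => by
    rw [le_div_iff₀ ht, mul_comm, ← hhom t ht u]
    exact hmin _

end RadialEpiderivative

section InnerProductSpace

variable {E : Type*} [NormedAddCommGroup E] [InnerProductSpace ℝ E]

theorem continuous_inner_sub_mul_norm (v : E) (c : ℝ) :
    Continuous fun u : E => inner ℝ v u - c * ‖u‖ := by
  fun_prop

theorem inner_sub_mul_norm_smul (v u : E) (c : ℝ) {t : ℝ} (ht : 0 < t) :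
    inner ℝ v (t • u) - c * ‖t • u‖ = t * (inner ℝ v u - c * ‖u‖) := by
  rw [real_inner_smul_right, norm_smul, Real.norm_of_nonneg ht.le]
  ring

end InnerProductSpace

theorem isWeakSubgradient_iff_forall_add {n : ℕ} (g : EuclideanSpace ℝ (Fin n) → ℝ)
    (x₀ v : EuclideanSpace ℝ (Fin n)) (c : ℝ) :
    IsWeakSubgradient g x₀ v c ↔ ∀ w, inner ℝ v w - c * ‖w‖ ≤ g (x₀ + w) - g x₀ := by
  refine ⟨fun hg w => ?_, fun hg x => ?_⟩
  · have := hg (x₀ + w)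
    rw [add_sub_cancel_left] at this
    linarith
  · have := hg (x - x₀)
    rw [add_sub_cancel] at this
    linarith

/-- `∂ʷ f^r(x₀; ·)(0) = ∂ʷ f(x₀)`: a pair `(v, c)` with `c ≥ 0` is a weak subgradient
of the (finite-valued) radial epiderivative at `0` iff it is a weak subgradient of `f`
at `x₀`. -/
theorem weakSubdifferential_radEpi_eq {n : ℕ}
    (f : EuclideanSpace ℝ (Fin n) → ℝ) (x₀ : EuclideanSpace ℝ (Fin n))
    (φ : EuclideanSpace ℝ (Fin n) → ℝ)
    (hφ : ∀ h, radEpi f x₀ h = ((φ h : ℝ) : EReal)) (hφ0 : φ 0 = 0) :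
    ∀ (v : EuclideanSpace ℝ (Fin n)) (c : ℝ), 0 ≤ c →
      (IsWeakSubgradient φ 0 v c ↔ IsWeakSubgradient f x₀ v c) := by
  intro v c _
  have hφ_le : ∀ h, φ h ≤ f (x₀ + h) - f x₀ := fun h =>
    EReal.coe_le_coe_iff.1 (hφ h ▸ radEpi_le_sub f x₀ h)
  simp only [isWeakSubgradient_iff_forall_add, hφ0, zero_add, sub_zero]
  refine ⟨fun hv w => (hv w).trans (hφ_le w), fun hv h => ?_⟩
  have := le_radEpi_of_homogeneous_minorant f x₀ (continuous_inner_sub_mul_norm v c)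
    (fun t ht u => inner_sub_mul_norm_smul v u c ht) hv h
  rwa [hφ, EReal.coe_le_coe_iff] at this
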